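/- Let P be a positive integer and p,q ∈ (0,1) real numbers such that pP + qP = 1 and p ≠ q. Then there exists a weighted graph R' on 2P vertices such that the graph R'_{>1/2} is bipartite and d_{K_m}(R(p,P;q,P)) < d_{K_m}(R') for every integer m with 2 ≤ m ≤ 2P. In fact, one may take R' to be the weighted graph obtained from R(p,P;q,P) by choosing one vertex u of weight p and one vertex v of weight q and changing both of their vertex weights to (p+q)/2 = 1/(2P), keeping all edge weights unchanged. -/

import Mathlib

open Filter

structure WeightedGraph (V : Type) [Fintype V] where
  vw : V → ℝ
  ew : V → V → ℝ
  vw_nonneg : ∀ v, 0 ≤ vw v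
  vw_le_one : ∀ v, vw v ≤ 1
  vw_sum : ∑ v, vw v = 1
  ew_nonneg : ∀ u v, 0 ≤ ew u v
  ew_le_one : ∀ u v, ew u v ≤ 1
  ew_symm : ∀ u v, ew u v = ew v u
  ew_self : ∀ v, ew v v = 0

namespace WeightedGraph

variable {V : Type} [Fintype V]

/-- The `K_m`-density of a weighted graph. -/
noncomputable def density (R : WeightedGraph V) (m : ℕ) : ℝ :=
  ∑ σ : Fin m → V, (∏ i, R.vw (σ i)) *
    ∏ p ∈ Finset.univ.filter (fun p : Fin m × Fin m => p.1 < p.2), R.ew (σ p.1) (σ p.2)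

/-- The simple graph `R_{>α}` of edges of weight greater than `α`. -/
def gtGraph (R : WeightedGraph V) (α : ℝ) : SimpleGraph V where
  Adj u v := u ≠ v ∧ α < R.ew u v
  symm := by
    refine ⟨?_⟩
    intro u v h
    refine ⟨h.1.symm, ?_⟩
    rw [R.ew_symm v u]
    exact h.2
  loopless := by refine ⟨?_⟩; intro v h; exact h.1 rfl

/-- `R` is `𝒦_t`-free. -/
def KtFree (R : WeightedGraph V) (t : ℕ) : Prop :=
  ¬ ∃ S₁ S₂ : Finset V, S₂ ⊆ S₁ ∧ 1 ≤ S₂.card ∧ S₁.card + S₂.card = t ∧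
      (R.gtGraph 0).IsClique (S₁ : Set V) ∧ (R.gtGraph (1/2)).IsClique (S₂ : Set V)

/-- The conditions (A1)–(A5) on a partition function `part`, for a `(b,a)`-partition
with the number of parts `a` implicit in the type of `part`. -/
def IsBAPartition (R : WeightedGraph V) (s : ℕ) {a : ℕ} (part : V → Fin a) : Prop :=
  Function.Surjective part ∧
  (∀ u v : V, u ≠ v → R.ew u v = 1/2 ∨ R.ew u v = 1) ∧
  (∀ u v : V, u ≠ v → (R.ew u v = 1/2 ↔ part u = part v)) ∧
  (∀ u v : V, part u = part v → R.vw u = R.vw v) ∧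
  (∀ i j : Fin a, (Finset.univ.filter fun x => part x = i).card ≤
      (Finset.univ.filter fun x => part x = j).card + 1) ∧
  (∀ u v : V, (Finset.univ.filter fun x => part x = part v).card ≤
      (Finset.univ.filter fun x => part x = part u).card → R.vw u ≤ R.vw v) ∧
  ((a = 1 ∧ ∀ i : Fin a, (Finset.univ.filter fun x => part x = i).card = s) ∨
   (2 ≤ a ∧ ∀ i : Fin a, (Finset.univ.filter fun x => part x = i).card ≤ s - 1))

/-- `R` admits a `(b,a)`-partition (with clique parameter `s`). -/
def AdmitsPartition (R : WeightedGraph V) (s b a : ℕ) : Prop :=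
  Fintype.card V = b ∧ 1 ≤ a ∧ ∃ part : V → Fin a, R.IsBAPartition s part

end WeightedGraph

/-- `π_s(𝒦_t)`: the supremum of the `K_s`-density over all `𝒦_t`-free weighted graphs. -/
noncomputable def piSup (s t : ℕ) : ℝ :=
  sSup {x : ℝ | ∃ (V : Type) (_ : Fintype V) (R : WeightedGraph V),
    R.KtFree t ∧ R.density s = x}

/-- The independence number of a simple graph. -/
noncomputable def indepNum {α : Type*} (G : SimpleGraph α) : ℕ :=
  sSup {k : ℕ | ∃ S : Finset α, (Gᶜ).IsNClique k S}

/-- The number `N(K_s, G)` of `s`-cliques of `G`. -/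
noncomputable def cliqueCount {α : Type*} (G : SimpleGraph α) (s : ℕ) : ℕ :=
  Set.ncard {S : Finset α | G.IsNClique s S}

/-- The Ramsey–Turán number `RT(n, K_s, K_t, ℓ)`. -/
noncomputable def RT (n s t : ℕ) (ℓ : ℝ) : ℕ :=
  sSup {N : ℕ | ∃ G : SimpleGraph (Fin n),
    G.CliqueFree t ∧ ((indepNum G : ℝ) < ℓ) ∧ N = cliqueCount G s}
/-- The two-part weighted graph `R(p,P;q,Q)`: `P` vertices of weight `p` and `Q` vertices of
weight `q`; edges inside a part have weight `1/2`, edges between the parts have weight `1`. -/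
noncomputable def Rpq (P Q : ℕ) (p q : ℝ) (hp : p ∈ Set.Ioo (0:ℝ) 1)
    (hq : q ∈ Set.Ioo (0:ℝ) 1) (hsum : p * P + q * Q = 1) :
    WeightedGraph (Fin P ⊕ Fin Q) where
  vw := Sum.elim (fun _ => p) (fun _ => q)
  ew u v := if u = v then 0 else if u.isLeft = v.isLeft then 1/2 else 1
  vw_nonneg v := by cases v <;> simp [le_of_lt hp.1, le_of_lt hq.1]
  vw_le_one v := by cases v <;> simp [le_of_lt hp.2, le_of_lt hq.2]
  vw_sum := by
    rw [Fintype.sum_sum_type]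
    simp only [Sum.elim_inl, Sum.elim_inr, Finset.sum_const, Finset.card_univ,
      Fintype.card_fin, nsmul_eq_mul]
    linarith
  ew_nonneg u v := by
    try dsimp only
    split
    · norm_num
    · split <;> norm_num
  ew_le_one u v := by
    try dsimp only
    split
    · norm_num
    · split <;> norm_num
  ew_symm u v := by
    try dsimp only
    rcases eq_or_ne u v with h | h
    · simp [h]
    · rw [if_neg h, if_neg (Ne.symm h)]
      by_cases h2 : u.isLeft = v.isLeft
      · rw [if_pos h2, if_pos h2.symm]
      · rw [if_neg h2, if_neg (fun e => h2 e.symm)]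
  ew_self v := by simp

/-!
For `σ : Fin m → V` the density has the summand `(∏ i, w (σ i)) * edgeProd ew σ`, and
`edgeProd ew σ = 0` unless `σ` is injective. Replacing the weights `p`, `q` of `u = inl a₀` and
`v = inr a₀` by their mean changes this summand by `((p - q) / 2) ^ 2` times a nonnegative factor
when `σ` hits both `u` and `v`, not at all when it hits neither, and by `± (q - p) / 2` times the
rest when it hits exactly one of them. For the last kind, sum over the orbit of `σ` under the Klein
four-group generated by `Sum.swap` and the transposition of `u` and `v`: if `σ` hits `u` and its
other values lie `a` on the left and `b` on the right, the orbit contributes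
`E₀ / 2 * (q - p) * (p ^ a * q ^ b - q ^ a * p ^ b) * ((1 / 2) ^ a - (1 / 2) ^ b)`, where `E₀ ≥ 0`
is the product of the edge weights among those values; the middle factor has the sign of
`(p - q) * (a - b)` and the last one that of `b - a`. An injective `σ` through both `u` and `v`,
which exists when `2 ≤ m ≤ 2P`, makes the total strictly positive since `p ≠ q`.
-/

open Finset

lemma mul_pow_sub_mul_pow_mul_nonneg {p q r : ℝ} (hp : 0 ≤ p) (hq : 0 ≤ q) (hr₀ : 0 ≤ r)
    (hr₁ : r ≤ 1) (a b : ℕ) :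
    0 ≤ (q - p) * (p ^ a * q ^ b - q ^ a * p ^ b) * (r ^ a - r ^ b) := by
  wlog hab : b ≤ a generalizing a b
  · convert this b a (le_of_not_ge hab) using 1
    ring
  obtain ⟨k, rfl⟩ := Nat.exists_eq_add_of_le hab
  have hpq : (q - p) * (p ^ k - q ^ k) ≤ 0 := by
    rcases le_total p q with h | h
    · exact mul_nonpos_of_nonneg_of_nonpos (sub_nonneg.2 h) (sub_nonpos.2 (pow_le_pow_left₀ hp h k))
    · exact mul_nonpos_of_nonpos_of_nonneg (sub_nonpos.2 h) (sub_nonneg.2 (pow_le_pow_left₀ hq h k))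
  have hr : r ^ k - 1 ≤ 0 := sub_nonpos.2 (pow_le_one₀ hr₀ hr₁)
  calc (0 : ℝ) ≤ (p * q) ^ b * r ^ b * ((q - p) * (p ^ k - q ^ k) * (r ^ k - 1)) :=
        mul_nonneg (by positivity) (mul_nonneg_of_nonpos_of_nonpos hpq hr)
    _ = _ := by ring

lemma exists_injective_mem_range_of_ne {V : Type*} [Fintype V] {m : ℕ} (hm : 2 ≤ m)
    (hmV : m ≤ Fintype.card V) {u v : V} (huv : u ≠ v) :
    ∃ σ : Fin m → V, σ.Injective ∧ u ∈ Set.range σ ∧ v ∈ Set.range σ := by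
  obtain ⟨e⟩ := Function.Embedding.nonempty_of_card_le (by simpa using hmV :
    Fintype.card (Fin m) ≤ Fintype.card V)
  obtain ⟨π, hπ⟩ := Equiv.Perm.exists_extending_pair (fun k : Fin 2 => e (Fin.castLE hm k)) ![u, v]
    (e.injective.comp (Fin.castLE_injective hm))
    (by intro a b; fin_cases a <;> fin_cases b <;> simp [huv, huv.symm])
  exact ⟨π ∘ e, π.injective.comp e.injective, ⟨_, hπ 0⟩, ⟨_, hπ 1⟩⟩

section EdgeProducts

variable {V : Type*} {m : ℕ} {F : V → V → ℝ}

def edgeProd (F : V → V → ℝ) (σ : Fin m → V) : ℝ :=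
  ∏ pr ∈ univ.filter (fun pr : Fin m × Fin m => pr.1 < pr.2), F (σ pr.1) (σ pr.2)

lemma edgeProd_nonneg (hF : ∀ x y, 0 ≤ F x y) (σ : Fin m → V) : 0 ≤ edgeProd F σ :=
  prod_nonneg fun _ _ => hF _ _

lemma edgeProd_pos (hF : ∀ x y, x ≠ y → 0 < F x y) {σ : Fin m → V} (hσ : σ.Injective) :
    0 < edgeProd F σ :=
  prod_pos fun _ hpr => hF _ _ (hσ.ne (mem_filter.1 hpr).2.ne)

lemma edgeProd_eq_zero_of_not_injective (hF : ∀ x, F x x = 0) {σ : Fin m → V}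
    (hσ : ¬σ.Injective) : edgeProd F σ = 0 := by
  obtain ⟨i, j, hij, hne⟩ := Function.not_injective_iff.1 hσ
  rcases hne.lt_or_gt with h | h
  · exact prod_eq_zero (i := (i, j)) (by simpa using h) (by rw [hij, hF])
  · exact prod_eq_zero (i := (j, i)) (by simpa using h) (by rw [hij, hF])

lemma edgeProd_comp {π : V → V} (hπ : ∀ x y, F (π x) (π y) = F x y) (σ : Fin m → V) :
    edgeProd F (π ∘ σ) = edgeProd F σ :=
  prod_congr rfl fun _ _ => hπ _ _

lemma edgeProd_eq_mul_prod_compl (hF : ∀ x y, F x y = F y x) (σ : Fin m → V) (i₀ : Fin m) :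
    edgeProd F σ =
      (∏ pr ∈ univ.filter (fun pr : Fin m × Fin m => pr.1 < pr.2 ∧ pr.1 ≠ i₀ ∧ pr.2 ≠ i₀),
        F (σ pr.1) (σ pr.2)) * ∏ j ∈ {i₀}ᶜ, F (σ i₀) (σ j) := by
  rw [edgeProd, ← prod_filter_mul_prod_filter_not _ (fun pr => pr.1 ≠ i₀ ∧ pr.2 ≠ i₀),
    filter_filter]
  congr 1
  symm
  refine prod_nbij' (fun j => if i₀ < j then (i₀, j) else (j, i₀))
    (fun pr => if pr.1 = i₀ then pr.2 else pr.1) ?_ ?_ ?_ ?_ ?_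
  all_goals intro a ha
  all_goals simp only [mem_compl, mem_singleton, mem_filter, mem_univ, true_and] at ha ⊢
  all_goals grind

end EdgeProducts

section Averaging

variable {V : Type*} [DecidableEq V] {m : ℕ}

noncomputable def averageVw (w : V → ℝ) (u v x : V) : ℝ :=
  if x = u ∨ x = v then (w u + w v) / 2 else w x

noncomputable def averagingGain (w : V → ℝ) (u v : V) (F : V → V → ℝ) (σ : Fin m → V) : ℝ :=
  ((∏ i, averageVw w u v (σ i)) - ∏ i, w (σ i)) * edgeProd F σ

variable {w : V → ℝ} {u v : V} {F : V → V → ℝ}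

lemma averageVw_left : averageVw w u v u = (w u + w v) / 2 := by simp [averageVw]

lemma averageVw_right : averageVw w u v v = (w u + w v) / 2 := by simp [averageVw]

lemma averageVw_of_ne {x : V} (hu : x ≠ u) (hv : x ≠ v) : averageVw w u v x = w x := by
  simp [averageVw, hu, hv]

lemma sum_averageVw [Fintype V] (huv : u ≠ v) : ∑ x, averageVw w u v x = ∑ x, w x := by
  have hrest : ∑ x ∈ ({u, v} : Finset V)ᶜ, averageVw w u v x = ∑ x ∈ ({u, v} : Finset V)ᶜ, w x :=
    sum_congr rfl fun x hx => by
      simp only [mem_compl, mem_insert, mem_singleton, not_or] at hx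
      exact averageVw_of_ne hx.1 hx.2
  rw [← sum_add_sum_compl {u, v}, ← sum_add_sum_compl {u, v} w, sum_pair huv, sum_pair huv, hrest,
    averageVw_left, averageVw_right]
  ring

lemma averagingGain_eq_mul_prod_compl (T : Finset (Fin m)) {σ : Fin m → V}
    (hT : ∀ i ∉ T, σ i ≠ u ∧ σ i ≠ v) :
    averagingGain w u v F σ = ((∏ i ∈ T, averageVw w u v (σ i)) - ∏ i ∈ T, w (σ i)) *
      (∏ i ∈ Tᶜ, w (σ i)) * edgeProd F σ := by
  have hrest : ∏ i ∈ Tᶜ, averageVw w u v (σ i) = ∏ i ∈ Tᶜ, w (σ i) :=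
    prod_congr rfl fun i hi => averageVw_of_ne (hT i (mem_compl.1 hi)).1 (hT i (mem_compl.1 hi)).2
  rw [averagingGain, ← prod_mul_prod_compl T, ← prod_mul_prod_compl T (fun i => w (σ i)), hrest]
  ring

lemma averagingGain_eq_of_forall_ne {σ : Fin m → V} {i₀ : Fin m}
    (hσ : ∀ j ≠ i₀, σ j ≠ u ∧ σ j ≠ v) :
    averagingGain w u v F σ =
      (averageVw w u v (σ i₀) - w (σ i₀)) * (∏ j ∈ {i₀}ᶜ, w (σ j)) * edgeProd F σ := by
  rw [averagingGain_eq_mul_prod_compl {i₀} fun j hj => hσ j (by simpa using hj), prod_singleton,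
    prod_singleton]

lemma averagingGain_eq_of_injective (huv : u ≠ v) {σ : Fin m → V} (hσ : σ.Injective)
    {i j : Fin m} (hi : σ i = u) (hj : σ j = v) :
    averagingGain w u v F σ =
      ((w u - w v) / 2) ^ 2 * (∏ k ∈ {i, j}ᶜ, w (σ k)) * edgeProd F σ := by
  have hij : i ≠ j := fun h => huv (hi ▸ hj ▸ congrArg σ h)
  rw [averagingGain_eq_mul_prod_compl {i, j} fun k hk => ?_, prod_pair hij, prod_pair hij, hi, hj,
    averageVw_left, averageVw_right]
  · ring
  · simp only [mem_insert, mem_singleton, not_or] at hk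
    exact ⟨fun h => hk.1 (hσ (h.trans hi.symm)), fun h => hk.2 (hσ (h.trans hj.symm))⟩

lemma averagingGain_eq_zero_of_not_injective (hF : ∀ x, F x x = 0) {σ : Fin m → V}
    (hσ : ¬σ.Injective) : averagingGain w u v F σ = 0 := by
  rw [averagingGain, edgeProd_eq_zero_of_not_injective hF hσ, mul_zero]

lemma averagingGain_nonneg (hw : ∀ x, 0 ≤ w x) (hF : ∀ x y, 0 ≤ F x y) (hF₀ : ∀ x, F x x = 0)
    (huv : u ≠ v) {σ : Fin m → V} (hσ : (∃ i, σ i = u) ↔ ∃ i, σ i = v) :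
    0 ≤ averagingGain w u v F σ := by
  by_cases hinj : σ.Injective
  · by_cases hu : ∃ i, σ i = u
    · obtain ⟨i, hi⟩ := hu
      obtain ⟨j, hj⟩ := hσ.1 ⟨i, hi⟩
      rw [averagingGain_eq_of_injective huv hinj hi hj]
      exact mul_nonneg (mul_nonneg (sq_nonneg _) (prod_nonneg fun _ _ => hw _))
        (edgeProd_nonneg hF σ)
    · have hv := hσ.not.1 hu
      simp only [not_exists] at hu hv
      simp [averagingGain_eq_mul_prod_compl ∅ fun i _ => ⟨hu i, hv i⟩]
  · rw [averagingGain_eq_zero_of_not_injective hF₀ hinj]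

lemma averagingGain_pos (hw : ∀ x, 0 < w x) (hF : ∀ x y, x ≠ y → 0 < F x y) (huv : w u ≠ w v)
    {σ : Fin m → V} (hσ : σ.Injective) {i j : Fin m} (hi : σ i = u) (hj : σ j = v) :
    0 < averagingGain w u v F σ := by
  rw [averagingGain_eq_of_injective (fun h => huv (congrArg w h)) hσ hi hj]
  exact mul_pos (mul_pos (sq_pos_of_ne_zero (div_ne_zero (sub_ne_zero.2 huv) two_ne_zero))
    (prod_pos fun _ _ => hw _)) (edgeProd_pos hF hσ)

end Averaging

namespace WeightedGraph

section Average

variable {V : Type} [Fintype V] [DecidableEq V]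

noncomputable def average (R : WeightedGraph V) (u v : V) (huv : u ≠ v) : WeightedGraph V where
  vw := averageVw R.vw u v
  ew := R.ew
  vw_nonneg x := by
    unfold averageVw; split_ifs <;> linarith [R.vw_nonneg x, R.vw_nonneg u, R.vw_nonneg v]
  vw_le_one x := by
    unfold averageVw; split_ifs <;> linarith [R.vw_le_one x, R.vw_le_one u, R.vw_le_one v]
  vw_sum := (sum_averageVw huv).trans R.vw_sum
  ew_nonneg := R.ew_nonneg
  ew_le_one := R.ew_le_one
  ew_symm := R.ew_symm
  ew_self := R.ew_self

variable (R : WeightedGraph V) {u v : V} (huv : u ≠ v)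

lemma average_vw_left : (R.average u v huv).vw u = (R.vw u + R.vw v) / 2 := averageVw_left

lemma average_vw_right : (R.average u v huv).vw v = (R.vw u + R.vw v) / 2 := averageVw_right

lemma average_vw_of_ne {x : V} (hu : x ≠ u) (hv : x ≠ v) : (R.average u v huv).vw x = R.vw x :=
  averageVw_of_ne hu hv

lemma density_average_sub_density (m : ℕ) :
    (R.average u v huv).density m - R.density m =
      ∑ σ : Fin m → V, averagingGain R.vw u v R.ew σ := by
  simp only [density, ← sum_sub_distrib, averagingGain, edgeProd, sub_mul]
  rfl

end Average

end WeightedGraph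

lemma Sum.swap_eq_iff_eq_swap {α β : Type*} {x : α ⊕ β} {y : β ⊕ α} : x.swap = y ↔ x = y.swap :=
  ⟨fun h => by rw [← h, Sum.swap_swap], fun h => by rw [h, Sum.swap_swap]⟩

section Blocks

variable {α β : Type*}

def blockVw (p q : ℝ) : α ⊕ β → ℝ := Sum.elim (fun _ => p) (fun _ => q)

noncomputable def blockEw [DecidableEq α] [DecidableEq β] (x y : α ⊕ β) : ℝ :=
  if x = y then 0 else if x.isLeft = y.isLeft then 1 / 2 else 1

lemma blockVw_nonneg {p q : ℝ} (hp : 0 ≤ p) (hq : 0 ≤ q) (x : α ⊕ β) : 0 ≤ blockVw p q x := by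
  cases x <;> assumption

lemma blockVw_pos {p q : ℝ} (hp : 0 < p) (hq : 0 < q) (x : α ⊕ β) : 0 < blockVw p q x := by
  cases x <;> assumption

lemma blockVw_swap (p q : ℝ) (x : α ⊕ β) : blockVw p q x.swap = blockVw q p x := by
  cases x <;> rfl

lemma prod_blockVw {ι : Type*} (s : Finset ι) (ρ : ι → α ⊕ β) (p q : ℝ) :
    ∏ j ∈ s, blockVw p q (ρ j) =
      p ^ #{j ∈ s | (ρ j).isLeft} * q ^ #{j ∈ s | ¬(ρ j).isLeft} := by
  have h (x : α ⊕ β) : blockVw p q x = if x.isLeft then p else q := by cases x <;> rfl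
  simp only [h, prod_ite, prod_const]

variable [DecidableEq α] [DecidableEq β]

lemma blockEw_comm (x y : α ⊕ β) : blockEw x y = blockEw y x := by
  unfold blockEw; grind

lemma blockEw_self (x : α ⊕ β) : blockEw x x = 0 := if_pos rfl

lemma blockEw_nonneg (x y : α ⊕ β) : 0 ≤ blockEw x y := by
  unfold blockEw; split_ifs <;> norm_num

lemma blockEw_pos {x y : α ⊕ β} (h : x ≠ y) : 0 < blockEw x y := by
  rw [blockEw, if_neg h]; split_ifs <;> norm_num

lemma blockEw_swap (x y : α ⊕ β) : blockEw x.swap y.swap = blockEw x y := by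
  cases x <;> cases y <;> simp [blockEw]

lemma blockEw_inl_of_ne {a : α} {x : α ⊕ β} (hx : x ≠ .inl a) :
    blockEw (.inl a) x = blockVw (1 / 2) 1 x := by
  cases x <;> simp_all [blockEw, blockVw, eq_comm]

lemma blockEw_inr_of_ne {b : β} {x : α ⊕ β} (hx : x ≠ .inr b) :
    blockEw (.inr b) x = blockVw 1 (1 / 2) x := by
  cases x <;> simp_all [blockEw, blockVw, eq_comm]

end Blocks

lemma WeightedGraph.colorable_two_of_ew_eq_blockEw {α β : Type} [Fintype α] [Fintype β]
    [DecidableEq α] [DecidableEq β] (R : WeightedGraph (α ⊕ β)) (hew : R.ew = blockEw) :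
    (R.gtGraph (1 / 2)).Colorable 2 := by
  refine (SimpleGraph.Coloring.mk Sum.isLeft fun {x y} hxy => ?_).colorable
  obtain ⟨hne, hlt⟩ := hxy
  rw [hew, blockEw, if_neg hne] at hlt
  intro h
  rw [if_pos h] at hlt
  exact lt_irrefl _ hlt

section Orbits

variable {α : Type*} [DecidableEq α] (a₀ : α) {p q : ℝ} {m : ℕ}

lemma swap_inl_inr_apply_swap (x : α ⊕ α) :
    Equiv.swap (.inl a₀) (.inr a₀) x.swap = (Equiv.swap (.inl a₀) (.inr a₀) x).swap := by
  rcases x with a | a <;> by_cases h : a = a₀ <;> simp [Equiv.swap_apply_def, h]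

variable (p q) in
noncomputable def orbitGain (σ : Fin m → α ⊕ α) : ℝ :=
  averagingGain (blockVw p q) (.inl a₀) (.inr a₀) blockEw σ +
    averagingGain (blockVw p q) (.inl a₀) (.inr a₀) blockEw (Sum.swap ∘ σ) +
    averagingGain (blockVw p q) (.inl a₀) (.inr a₀) blockEw
      (Equiv.swap (.inl a₀) (.inr a₀) ∘ σ) +
    averagingGain (blockVw p q) (.inl a₀) (.inr a₀) blockEw
      (Equiv.swap (.inl a₀) (.inr a₀) ∘ Sum.swap ∘ σ)

lemma sum_orbitGain [Fintype α] :
    ∑ σ : Fin m → α ⊕ α, orbitGain a₀ p q σ =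
      4 * ∑ σ : Fin m → α ⊕ α, averagingGain (blockVw p q) (.inl a₀) (.inr a₀) blockEw σ := by
  set g : (Fin m → α ⊕ α) → ℝ := averagingGain (blockVw p q) (.inl a₀) (.inr a₀) blockEw
  have h (π : α ⊕ α ≃ α ⊕ α) : ∑ σ, g (π ∘ σ) = ∑ σ, g σ :=
    ((Equiv.refl (Fin m)).arrowCongr π).sum_comp g
  have hτ : ∑ σ, g (Sum.swap ∘ σ) = ∑ σ, g σ := h (Equiv.sumComm α α)
  have hμτ : ∑ σ, g (Equiv.swap (.inl a₀) (.inr a₀) ∘ Sum.swap ∘ σ) = ∑ σ, g σ :=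
    h ((Equiv.sumComm α α).trans (Equiv.swap _ _))
  simp only [orbitGain, sum_add_distrib]
  rw [hτ, h, hμτ]
  ring

lemma orbitGain_swap_comp (σ : Fin m → α ⊕ α) :
    orbitGain a₀ p q (Equiv.swap (.inl a₀) (.inr a₀) ∘ σ) = orbitGain a₀ p q σ := by
  unfold orbitGain
  set μ := Equiv.swap (Sum.inl a₀ : α ⊕ α) (.inr a₀)
  have hcomm (ρ : Fin m → α ⊕ α) : Sum.swap ∘ μ ∘ ρ = μ ∘ Sum.swap ∘ ρ :=
    funext fun i => (swap_inl_inr_apply_swap a₀ (ρ i)).symm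
  have hinv (ρ : Fin m → α ⊕ α) : μ ∘ μ ∘ ρ = ρ := funext fun i => Equiv.swap_apply_self _ _ _
  simp only [hcomm, hinv]
  ring

lemma orbitGain_eq_of_forall_ne {σ : Fin m → α ⊕ α} {i₀ : Fin m} (h₀ : σ i₀ = .inl a₀)
    (hσ : ∀ j ≠ i₀, σ j ≠ .inl a₀ ∧ σ j ≠ .inr a₀) :
    orbitGain a₀ p q σ = (q - p) / 2 *
      ((∏ j ∈ {i₀}ᶜ, blockVw p q (σ j)) - ∏ j ∈ {i₀}ᶜ, blockVw q p (σ j)) *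
      (edgeProd blockEw σ - edgeProd blockEw (Equiv.swap (.inl a₀) (.inr a₀) ∘ σ)) := by
  rw [orbitGain]
  set μ := Equiv.swap (Sum.inl a₀ : α ⊕ α) (.inr a₀)
  have hτσ : ∀ j ≠ i₀, (σ j).swap ≠ .inl a₀ ∧ (σ j).swap ≠ .inr a₀ := fun j hj =>
    ⟨fun h => (hσ j hj).2 (by simpa using congrArg Sum.swap h),
      fun h => (hσ j hj).1 (by simpa using congrArg Sum.swap h)⟩
  have hμ : ∀ j ≠ i₀, μ (σ j) = σ j := fun j hj =>
    Equiv.swap_apply_of_ne_of_ne (hσ j hj).1 (hσ j hj).2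
  have hμτ : ∀ j ≠ i₀, μ (σ j).swap = (σ j).swap := fun j hj =>
    Equiv.swap_apply_of_ne_of_ne (hτσ j hj).1 (hτσ j hj).2
  have hrest (ρ : Fin m → α ⊕ α) (hρ : ∀ j ≠ i₀, μ (ρ j) = ρ j) :
      ∏ j ∈ {i₀}ᶜ, blockVw p q (μ (ρ j)) = ∏ j ∈ {i₀}ᶜ, blockVw p q (ρ j) :=
    prod_congr rfl fun j hj => by rw [hρ j (by simpa using hj)]
  have hEτ : edgeProd blockEw (Sum.swap ∘ σ) = edgeProd blockEw σ := edgeProd_comp blockEw_swap σ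
  have hEμτ : edgeProd blockEw (μ ∘ Sum.swap ∘ σ) = edgeProd blockEw (μ ∘ σ) := by
    rw [show μ ∘ Sum.swap ∘ σ = Sum.swap ∘ μ ∘ σ from
      funext fun i => swap_inl_inr_apply_swap a₀ (σ i)]
    exact edgeProd_comp blockEw_swap _
  -- at `i₀` the four maps take the values `inl a₀, inr a₀, inr a₀, inl a₀`; elsewhere `μ` is inert
  rw [averagingGain_eq_of_forall_ne hσ, averagingGain_eq_of_forall_ne (σ := Sum.swap ∘ σ) hτσ,
    averagingGain_eq_of_forall_ne (σ := μ ∘ σ) (i₀ := i₀) fun j hj => by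
      simpa [hμ j hj] using hσ j hj,
    averagingGain_eq_of_forall_ne (σ := μ ∘ Sum.swap ∘ σ) (i₀ := i₀) fun j hj => by
      simpa [hμτ j hj] using hτσ j hj, hEτ, hEμτ]
  simp only [Function.comp_apply, hrest σ hμ, hrest (fun j => (σ j).swap) hμτ, blockVw_swap]
  rw [h₀, Sum.swap_inl, Equiv.swap_apply_left, Equiv.swap_apply_right, averageVw_left,
    averageVw_right]
  simp only [blockVw, Sum.elim_inl, Sum.elim_inr]
  ring

lemma exists_edgeProd_blockEw_eq {σ : Fin m → α ⊕ α} {i₀ : Fin m} (h₀ : σ i₀ = .inl a₀)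
    (hσ : ∀ j ≠ i₀, σ j ≠ .inl a₀ ∧ σ j ≠ .inr a₀) :
    ∃ E₀ ≥ 0, edgeProd blockEw σ = E₀ * ∏ j ∈ {i₀}ᶜ, blockVw (1 / 2) 1 (σ j) ∧
      edgeProd blockEw (Equiv.swap (.inl a₀) (.inr a₀) ∘ σ) =
        E₀ * ∏ j ∈ {i₀}ᶜ, blockVw 1 (1 / 2) (σ j) := by
  have hμ : ∀ j ≠ i₀, Equiv.swap (.inl a₀) (.inr a₀) (σ j) = σ j := fun j hj =>
    Equiv.swap_apply_of_ne_of_ne (hσ j hj).1 (hσ j hj).2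
  refine ⟨∏ pr ∈ univ.filter (fun pr : Fin m × Fin m => pr.1 < pr.2 ∧ pr.1 ≠ i₀ ∧ pr.2 ≠ i₀),
    blockEw (σ pr.1) (σ pr.2), prod_nonneg fun _ _ => blockEw_nonneg _ _, ?_, ?_⟩
  · rw [edgeProd_eq_mul_prod_compl blockEw_comm σ i₀, h₀]
    exact congrArg _ (prod_congr rfl fun j hj => blockEw_inl_of_ne (hσ j (by simpa using hj)).1)
  · rw [edgeProd_eq_mul_prod_compl blockEw_comm _ i₀]
    congr 1
    · refine prod_congr rfl fun pr hpr => ?_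
      simp only [mem_filter, mem_univ, true_and] at hpr
      simp only [Function.comp_apply, hμ _ hpr.2.1, hμ _ hpr.2.2]
    · refine prod_congr rfl fun j hj => ?_
      have hj : j ≠ i₀ := by simpa using hj
      rw [Function.comp_apply, Function.comp_apply, h₀, hμ j hj, Equiv.swap_apply_left]
      exact blockEw_inr_of_ne (hσ j hj).2

lemma orbitGain_nonneg_of_forall_ne (hp : 0 ≤ p) (hq : 0 ≤ q) {σ : Fin m → α ⊕ α} {i₀ : Fin m}
    (h₀ : σ i₀ = .inl a₀) (hσ : ∀ j ≠ i₀, σ j ≠ .inl a₀ ∧ σ j ≠ .inr a₀) :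
    0 ≤ orbitGain a₀ p q σ := by
  obtain ⟨E₀, hE₀, hE, hEμ⟩ := exists_edgeProd_blockEw_eq a₀ h₀ hσ
  rw [orbitGain_eq_of_forall_ne a₀ h₀ hσ, hE, hEμ]
  simp only [prod_blockVw]
  set a := #{j ∈ ({i₀}ᶜ : Finset (Fin m)) | (σ j).isLeft}
  set b := #{j ∈ ({i₀}ᶜ : Finset (Fin m)) | ¬(σ j).isLeft}
  calc (0 : ℝ) ≤ E₀ / 2 *
        ((q - p) * (p ^ a * q ^ b - q ^ a * p ^ b) * ((1 / 2) ^ a - (1 / 2) ^ b)) :=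
        mul_nonneg (by positivity)
          (mul_pow_sub_mul_pow_mul_nonneg hp hq (by norm_num) (by norm_num) a b)
    _ = _ := by ring

lemma averagingGain_le_orbitGain (hp : 0 ≤ p) (hq : 0 ≤ q) {σ : Fin m → α ⊕ α}
    (hσ : (∃ i, σ i = .inl a₀) ↔ ∃ i, σ i = .inr a₀) :
    averagingGain (blockVw p q) (.inl a₀) (.inr a₀) blockEw σ ≤ orbitGain a₀ p q σ := by
  have hg (ρ : Fin m → α ⊕ α) (hρ : (∃ i, ρ i = .inl a₀) ↔ ∃ i, ρ i = .inr a₀) :=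
    averagingGain_nonneg (blockVw_nonneg hp hq) blockEw_nonneg blockEw_self Sum.inl_ne_inr hρ
  have hτ : (∃ i, (σ i).swap = .inl a₀) ↔ ∃ i, (σ i).swap = .inr a₀ := by
    simpa [Sum.swap_eq_iff_eq_swap] using hσ.symm
  have h₁ := hg (Sum.swap ∘ σ) hτ
  have h₂ := hg (Equiv.swap (.inl a₀) (.inr a₀) ∘ σ)
    (by simpa [Equiv.swap_apply_eq_iff] using hσ.symm)
  have h₃ := hg (Equiv.swap (.inl a₀) (.inr a₀) ∘ Sum.swap ∘ σ)
    (by simpa [Equiv.swap_apply_eq_iff] using hτ.symm)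
  rw [orbitGain]
  linarith

lemma orbitGain_nonneg (hp : 0 ≤ p) (hq : 0 ≤ q) (σ : Fin m → α ⊕ α) :
    0 ≤ orbitGain a₀ p q σ := by
  by_cases hbal : (∃ i, σ i = .inl a₀) ↔ ∃ i, σ i = .inr a₀
  · exact (averagingGain_nonneg (blockVw_nonneg hp hq) blockEw_nonneg blockEw_self
      Sum.inl_ne_inr hbal).trans (averagingGain_le_orbitGain a₀ hp hq hbal)
  by_cases hinj : σ.Injective
  · wlog hu : ∃ i, σ i = .inl a₀ generalizing σ
    · have hv : ∃ i, σ i = .inr a₀ := by tauto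
      rw [← orbitGain_swap_comp]
      refine this _ ?_ ((Equiv.injective _).comp hinj) ?_ <;>
        simp only [Function.comp_apply, Equiv.swap_apply_eq_iff, Equiv.swap_apply_left,
          Equiv.swap_apply_right]
      · exact fun h => hbal h.symm
      · exact hv
    obtain ⟨i₀, h₀⟩ := hu
    have hv : ∀ j, σ j ≠ .inr a₀ := fun j hj => hbal ⟨fun _ => ⟨j, hj⟩, fun _ => ⟨i₀, h₀⟩⟩
    exact orbitGain_nonneg_of_forall_ne a₀ hp hq h₀ fun j hj =>
      ⟨fun h => hj (hinj (h.trans h₀.symm)), hv j⟩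
  · have h (π : α ⊕ α → α ⊕ α) :
        averagingGain (blockVw p q) (.inl a₀) (.inr a₀) blockEw (π ∘ σ) = 0 :=
      averagingGain_eq_zero_of_not_injective blockEw_self fun h => hinj h.of_comp
    rw [orbitGain, ← Function.comp_assoc, h, h, h, ← Function.id_comp σ, h]
    norm_num

lemma exists_orbitGain_pos [Fintype α] (hp : 0 < p) (hq : 0 < q) (hpq : p ≠ q) (hm : 2 ≤ m)
    (hmα : m ≤ Fintype.card (α ⊕ α)) : ∃ σ : Fin m → α ⊕ α, 0 < orbitGain a₀ p q σ := by
  obtain ⟨σ, hσ, ⟨i, hi⟩, ⟨j, hj⟩⟩ := exists_injective_mem_range_of_ne hm hmα Sum.inl_ne_inr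
  refine ⟨σ, lt_of_lt_of_le ?_
    (averagingGain_le_orbitGain a₀ hp.le hq.le (iff_of_true ⟨i, hi⟩ ⟨j, hj⟩))⟩
  exact averagingGain_pos (u := (.inl a₀ : α ⊕ α)) (v := .inr a₀) (blockVw_pos hp hq)
    (fun _ _ => blockEw_pos) hpq hσ hi hj

end Orbits

namespace WeightedGraph

variable {α : Type} [Fintype α] [DecidableEq α]

theorem density_lt_density_average {p q : ℝ} (R : WeightedGraph (α ⊕ α))
    (hvw : R.vw = blockVw p q) (hew : R.ew = blockEw) (hp : 0 < p) (hq : 0 < q) (hpq : p ≠ q)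
    (a₀ : α) {m : ℕ} (hm : 2 ≤ m) (hmα : m ≤ Fintype.card (α ⊕ α)) :
    R.density m < (R.average (.inl a₀) (.inr a₀) Sum.inl_ne_inr).density m := by
  rw [← sub_pos, density_average_sub_density, hvw, hew]
  obtain ⟨σ₀, hσ₀⟩ := exists_orbitGain_pos a₀ hp hq hpq hm hmα
  have h := sum_pos' (fun σ _ => orbitGain_nonneg a₀ hp.le hq.le σ) ⟨σ₀, mem_univ _, hσ₀⟩
  rw [sum_orbitGain] at h
  linarith

end WeightedGraph

theorem equalizing_weights_improves_density (P : ℕ) (hP : 0 < P) (p q : ℝ)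
    (hp : p ∈ Set.Ioo (0:ℝ) 1) (hq : q ∈ Set.Ioo (0:ℝ) 1)
    (hsum : p * P + q * P = 1) (hne : p ≠ q) :
    ∃ R' : WeightedGraph (Fin P ⊕ Fin P),
      (∀ x y, R'.ew x y = (Rpq P P p q hp hq hsum).ew x y) ∧
      R'.vw (Sum.inl ⟨0, hP⟩) = (p + q) / 2 ∧
      R'.vw (Sum.inr ⟨0, hP⟩) = (p + q) / 2 ∧
      (∀ x : Fin P, x ≠ ⟨0, hP⟩ → R'.vw (Sum.inl x) = p) ∧
      (∀ y : Fin P, y ≠ ⟨0, hP⟩ → R'.vw (Sum.inr y) = q) ∧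
      (R'.gtGraph (1/2)).Colorable 2 ∧
      ∀ m : ℕ, 2 ≤ m → m ≤ P + P →
        (Rpq P P p q hp hq hsum).density m < R'.density m := by
  set R := Rpq P P p q hp hq hsum
  have hvw : R.vw = blockVw p q := rfl
  have hew : R.ew = blockEw := rfl
  refine ⟨R.average (.inl ⟨0, hP⟩) (.inr ⟨0, hP⟩) Sum.inl_ne_inr, fun _ _ => rfl,
    R.average_vw_left _, R.average_vw_right _,
    fun x hx => R.average_vw_of_ne _ (by simpa using hx) Sum.inl_ne_inr,
    fun y hy => R.average_vw_of_ne _ Sum.inr_ne_inl (by simpa using hy),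
    WeightedGraph.colorable_two_of_ew_eq_blockEw _ hew, fun m hm hmP => ?_⟩
  exact R.density_lt_density_average hvw hew hp.1 hq.1 hne _ hm (by simpa using hmP)
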